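/- arXiv:2410.12918 — 3 statements merged into one kernel-verified Lean document; each statement's English description precedes it below -/
import Mathlib

section
/- For real x sufficiently large, define α₁(x) = ((x−1)/(x·log x))·(1 − (1 − (log x)/(x−1))^x) (with real exponent), α(x) = (1 − α₁(x))/(x−1), and T̂(x) = (1/(2α₁(x)²))·( x·α₁(x)² + 1 − (x·α(x))² + √((x·α₁(x)² + 1 − (x·α(x))²)² + 4·α(x)²·α₁(x)²·x³) ). Then T̂(x) − x is asymptotically equivalent to (log x)² as x → ∞, i.e., (T̂(x) − x)/(log x)² → 1. -/
/-!
With `A = α₁²` and `W = (x α)²`, `T̂` is the positive root of `A T² − (x A + 1 − W) T − W x = 0`,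
so `D = T̂ − x` is the positive root of `A D² + c D − x = 0` with `c = W + x A − 1`, i.e.
`D = 2x / (c + √(c² + 4 A x))` after rationalising. Since `(1 − log x/(x−1))^x ≤ e^{−log x} = 1/x`,
we get `α₁ log x → 1`, hence `α₁ → 0` and `x α → 1`. Dividing by `(log x)²`, the denominator
becomes `r + √(r² + 4 s)` with `r = (log x)²/x · (W − 1) + (α₁ log x)² → 1` and
`s = (α₁ log x)² (log x)²/x → 0`, because `(log x)²/x → 0`; so `D / (log x)² → 2 / 2 = 1`.
-/

open Filter

/-- Expected self-aggregation weight in DivShare with `n = x` nodes and fan-out `J = log x`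
(real exponent): `α₁(x) = ((x−1)/(x·log x))·(1 − (1 − (log x)/(x−1))^x)`. -/
noncomputable def divshareAlpha1 (x : ℝ) : ℝ :=
  ((x - 1) / (x * Real.log x)) * (1 - (1 - Real.log x / (x - 1)) ^ x)

/-- Expected weight assigned to each other node: `α(x) = (1 − α₁(x))/(x−1)`. -/
noncomputable def divshareAlpha (x : ℝ) : ℝ :=
  (1 - divshareAlpha1 x) / (x - 1)

/-- The threshold `T̂(x)` on the total communication delay coming from the
straggling–communication balance condition. -/
noncomputable def divshareThat (x : ℝ) : ℝ :=
  (1 / (2 * divshareAlpha1 x ^ 2)) *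
    (x * divshareAlpha1 x ^ 2 + 1 - (x * divshareAlpha x) ^ 2 +
      Real.sqrt ((x * divshareAlpha1 x ^ 2 + 1 - (x * divshareAlpha x) ^ 2) ^ 2 +
        4 * divshareAlpha x ^ 2 * divshareAlpha1 x ^ 2 * x ^ 3))

open Real Topology

lemma one_sub_rpow_le_exp_neg_mul {y z : ℝ} (hy : y ≤ 1) (hz : 0 ≤ z) :
    (1 - y) ^ z ≤ exp (-(y * z)) :=
  calc (1 - y) ^ z ≤ exp (-y) ^ z :=
        rpow_le_rpow (by linarith) (by linarith [add_one_le_exp (-y)]) hz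
    _ = exp (-(y * z)) := by rw [← exp_mul, neg_mul]

lemma sqrt_sub_div_eq_div_add_sqrt {A p c : ℝ} (hA : 0 < A) (hp : 0 < p) :
    (√(c ^ 2 + 4 * A * p) - c) / (2 * A) = 2 * p / (c + √(c ^ 2 + 4 * A * p)) := by
  have hsq := sq_sqrt (show 0 ≤ c ^ 2 + 4 * A * p by positivity)
  have habs : |c| < √(c ^ 2 + 4 * A * p) :=
    (lt_sqrt (abs_nonneg c)).2 (by rw [sq_abs]; nlinarith [mul_pos hA hp])
  have hpos : 0 < c + √(c ^ 2 + 4 * A * p) := by linarith [neg_abs_le c]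
  rw [div_eq_div_iff (by positivity) hpos.ne']
  linear_combination hsq

lemma two_div_add_sqrt_div {c d k : ℝ} (hk : 0 < k) :
    2 / (c / k + √((c / k) ^ 2 + d / k ^ 2)) = 2 * k / (c + √(c ^ 2 + d)) := by
  have hsqrt : √((c / k) ^ 2 + d / k ^ 2) = √(c ^ 2 + d) / k := by
    rw [div_pow, ← add_div, sqrt_div' _ (by positivity), sqrt_sq hk.le]
  rw [hsqrt, ← add_div, div_div_eq_mul_div]

lemma divshareThat_sub_self {x : ℝ} (hx : 0 < x) (h : divshareAlpha1 x ≠ 0) :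
    divshareThat x - x =
      2 * x / ((x * divshareAlpha x) ^ 2 + x * divshareAlpha1 x ^ 2 - 1 +
        √(((x * divshareAlpha x) ^ 2 + x * divshareAlpha1 x ^ 2 - 1) ^ 2 +
          4 * divshareAlpha1 x ^ 2 * x)) := by
  rw [← sqrt_sub_div_eq_div_add_sqrt (by positivity) hx]
  unfold divshareThat
  set a₁ := divshareAlpha1 x
  set w := x * divshareAlpha x
  have hΔ : (x * a₁ ^ 2 + 1 - w ^ 2) ^ 2 + 4 * divshareAlpha x ^ 2 * a₁ ^ 2 * x ^ 3 =
      (w ^ 2 + x * a₁ ^ 2 - 1) ^ 2 + 4 * a₁ ^ 2 * x := by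
    simp only [w]; ring
  rw [hΔ]
  field_simp
  ring

lemma tendsto_one_sub_log_div_rpow_atTop :
    Tendsto (fun x : ℝ => (1 - log x / (x - 1)) ^ x) atTop (𝓝 0) := by
  have hy : ∀ x : ℝ, 1 < x → log x / (x - 1) ≤ 1 := fun x hx =>
    (div_le_one (by linarith)).2 (by linarith [log_le_sub_one_of_pos (by linarith : 0 < x)])
  refine tendsto_of_tendsto_of_tendsto_of_le_of_le' tendsto_const_nhds
    tendsto_inv_atTop_zero ?_ ?_
  · filter_upwards [eventually_gt_atTop 1] with x hx
    exact rpow_nonneg (by linarith [hy x hx]) x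
  · filter_upwards [eventually_gt_atTop 1] with x hx
    have hlog : 0 ≤ log x := log_nonneg hx.le
    calc (1 - log x / (x - 1)) ^ x ≤ exp (-(log x / (x - 1) * x)) :=
          one_sub_rpow_le_exp_neg_mul (hy x hx) (by linarith)
      _ ≤ exp (-log x) := by
          gcongr
          rw [div_mul_eq_mul_div, le_div_iff₀ (by linarith)]
          nlinarith
      _ = x⁻¹ := by rw [exp_neg, exp_log (by linarith)]

lemma tendsto_divshareAlpha1_mul_log :
    Tendsto (fun x => divshareAlpha1 x * log x) atTop (𝓝 1) := by
  have h := (tendsto_inv_atTop_zero.const_sub 1).mul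
    (tendsto_one_sub_log_div_rpow_atTop.const_sub 1)
  rw [sub_zero, one_mul] at h
  refine h.congr' ?_
  filter_upwards [eventually_gt_atTop 1] with x hx
  have hlog : log x ≠ 0 := (log_pos hx).ne'
  unfold divshareAlpha1
  field_simp

lemma tendsto_divshareAlpha1 : Tendsto divshareAlpha1 atTop (𝓝 0) := by
  have h := tendsto_divshareAlpha1_mul_log.mul tendsto_log_atTop.inv_tendsto_atTop
  rw [mul_zero] at h
  refine h.congr' ?_
  filter_upwards [eventually_gt_atTop 1] with x hx
  have hlog : log x ≠ 0 := (log_pos hx).ne'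
  simp only [Pi.inv_apply]
  field_simp

lemma tendsto_mul_divshareAlpha : Tendsto (fun x => x * divshareAlpha x) atTop (𝓝 1) := by
  have h := (tendsto_divshareAlpha1.const_sub 1).div
    (tendsto_inv_atTop_zero.const_sub 1) (by norm_num : (1 : ℝ) - 0 ≠ 0)
  rw [sub_zero, div_one] at h
  refine h.congr' ?_
  filter_upwards [eventually_gt_atTop 1] with x hx
  have hx' : x - 1 ≠ 0 := by linarith
  simp only [Pi.div_apply, divshareAlpha]
  field_simp

lemma divshareThat_sub_self_div_log_sq {x : ℝ} (hx : 1 < x) (h : divshareAlpha1 x ≠ 0) :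
    (divshareThat x - x) / log x ^ 2 =
      2 / (log x ^ 2 / x * ((x * divshareAlpha x) ^ 2 - 1) + (divshareAlpha1 x * log x) ^ 2 +
        √((log x ^ 2 / x * ((x * divshareAlpha x) ^ 2 - 1) + (divshareAlpha1 x * log x) ^ 2) ^ 2
          + 4 * ((divshareAlpha1 x * log x) ^ 2 * (log x ^ 2 / x)))) := by
  have hlog : 0 < log x := log_pos hx
  have hx₀ : 0 < x := by linarith
  have hk : 0 < x / log x ^ 2 := by positivity
  set c := (x * divshareAlpha x) ^ 2 + x * divshareAlpha1 x ^ 2 - 1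
  have hr : log x ^ 2 / x * ((x * divshareAlpha x) ^ 2 - 1) + (divshareAlpha1 x * log x) ^ 2 =
      c / (x / log x ^ 2) := by
    field_simp
    ring
  have hs : 4 * ((divshareAlpha1 x * log x) ^ 2 * (log x ^ 2 / x)) =
      4 * divshareAlpha1 x ^ 2 * x / (x / log x ^ 2) ^ 2 := by
    field_simp
  rw [hr, hs, two_div_add_sqrt_div hk, divshareThat_sub_self hx₀ h]
  ring

lemma Filter.Tendsto.two_div_add_sqrt {α : Type*} {l : Filter α} {r s : α → ℝ}
    (hr : Tendsto r l (𝓝 1)) (hs : Tendsto s l (𝓝 0)) :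
    Tendsto (fun a => 2 / (r a + √(r a ^ 2 + 4 * s a))) l (𝓝 1) := by
  have h := (tendsto_const_nhds (x := (2 : ℝ))).div
    (hr.add ((hr.pow 2).add (hs.const_mul 4)).sqrt) (by norm_num : (1 : ℝ) + √(1 ^ 2 + 4 * 0) ≠ 0)
  norm_num at h
  exact h

/-- In the partial-communication regime `J = log x`, the admissible total excess
straggling satisfies `T̂(x) − x ∼ (log x)²` as `x → ∞`. -/
theorem partial_communication_threshold_asymptotics :
    Tendsto (fun x : ℝ => (divshareThat x - x) / (Real.log x) ^ 2) atTop (nhds 1) := by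
  have hlog : Tendsto (fun x => log x ^ 2 / x) atTop (𝓝 0) := by
    simpa using tendsto_pow_log_div_mul_add_atTop 1 0 2 one_ne_zero
  have hu := tendsto_divshareAlpha1_mul_log
  have hr : Tendsto (fun x => log x ^ 2 / x * ((x * divshareAlpha x) ^ 2 - 1) +
      (divshareAlpha1 x * log x) ^ 2) atTop (𝓝 1) := by
    simpa using (hlog.mul ((tendsto_mul_divshareAlpha.pow 2).sub_const 1)).add (hu.pow 2)
  have hs : Tendsto (fun x => (divshareAlpha1 x * log x) ^ 2 * (log x ^ 2 / x)) atTop (𝓝 0) := by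
    simpa using (hu.pow 2).mul hlog
  refine (hr.two_div_add_sqrt hs).congr' ?_
  filter_upwards [eventually_gt_atTop 1, hu.eventually_ne one_ne_zero] with x hx hne
  exact (divshareThat_sub_self_div_log_sq hx (left_ne_zero_of_mul hne)).symm
end

section
/- Let T > 1, α ∈ (0,1) and λ₂ ∈ (0,1) be real numbers, write L = |log λ₂| and A = 2·log(T)·(1−α)/α, and for ρ ∈ (0,1) define k_ρ = ( (√A + √(A + 8·L·|log(1−ρ)|)) / (2L) )². Then there exists ρ ∈ (0,1) such that k_ρ/ρ ≤ 8·( α·L + (1−α)·log T ) / ( α·L² ). -/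
/-!
Take `ρ = A / (A + 4L)`, i.e. `1/(1+a)` with `a = 4L/A`, which is the paper's choice since
`A·a = 4L`. Then `|log (1 - ρ)| = log (1 + A/(4L)) ≤ A/(4L)`, so the second radicand is at most
`3A`, and `(√x + √y)² ≤ 2(x + y)` bounds `k_ρ` by `2A/L²`. Dividing by `ρ` gives
`2(A + 4L)/L² = 2A/L² + 8/L`, while the claimed bound is `4A/L² + 8/L`.
-/

open Real Set

/-- The paper's `k_ρ`. -/
noncomputable def mixingRounds (A L ρ : ℝ) : ℝ :=
  ((√A + √(A + 8 * L * |log (1 - ρ)|)) / (2 * L)) ^ 2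

lemma abs_log_div_add_le {x y : ℝ} (hx : 0 < x) (hy : 0 ≤ y) :
    |log (x / (x + y))| ≤ y / x := by
  have hxy : 0 < x + y := by linarith
  have hge : 1 ≤ (x + y) / x := by rw [le_div_iff₀ hx]; linarith
  rw [← inv_div, log_inv, abs_neg, abs_of_nonneg (log_nonneg hge)]
  calc log ((x + y) / x) ≤ (x + y) / x - 1 := log_le_sub_one_of_pos (by positivity)
    _ = y / x := by field_simp; ring

lemma sqrt_add_sqrt_sq_le {x y : ℝ} (hx : 0 ≤ x) (hy : 0 ≤ y) :
    (√x + √y) ^ 2 ≤ 2 * (x + y) := by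
  simpa only [sq_sqrt hx, sq_sqrt hy] using add_sq_le (a := √x) (b := √y)

lemma mixingRounds_le {A L ρ : ℝ} (hA : 0 ≤ A) (hL : 0 < L)
    (hlog : 8 * L * |log (1 - ρ)| ≤ 2 * A) :
    mixingRounds A L ρ ≤ 2 * A / L ^ 2 := by
  have hB : 0 ≤ 8 * L * |log (1 - ρ)| := by positivity
  calc mixingRounds A L ρ
      = (√A + √(A + 8 * L * |log (1 - ρ)|)) ^ 2 / (4 * L ^ 2) := by
        rw [mixingRounds, div_pow]; ring
    _ ≤ 2 * (A + (A + 8 * L * |log (1 - ρ)|)) / (4 * L ^ 2) := by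
        gcongr; exact sqrt_add_sqrt_sq_le hA (by linarith)
    _ ≤ 2 * A / L ^ 2 := by
        rw [div_le_div_iff₀ (by positivity) (by positivity)]
        nlinarith [sq_nonneg L]

lemma exists_mixingRounds_div_le {A L : ℝ} (hA : 0 < A) (hL : 0 < L) :
    ∃ ρ ∈ Ioo (0 : ℝ) 1, mixingRounds A L ρ / ρ ≤ 2 * (A + 4 * L) / L ^ 2 := by
  have hAL : 0 < A + 4 * L := by linarith
  refine ⟨A / (A + 4 * L), ⟨by positivity, by rw [div_lt_one hAL]; linarith⟩, ?_⟩
  have hlog : 8 * L * |log (1 - A / (A + 4 * L))| ≤ 2 * A := by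
    have h1ρ : 1 - A / (A + 4 * L) = 4 * L / (4 * L + A) := by field_simp; ring
    calc 8 * L * |log (1 - A / (A + 4 * L))| ≤ 8 * L * (A / (4 * L)) := by
          rw [h1ρ]; gcongr; exact abs_log_div_add_le (by positivity) hA.le
      _ = 2 * A := by field_simp; ring
  calc mixingRounds A L (A / (A + 4 * L)) / (A / (A + 4 * L))
      ≤ 2 * A / L ^ 2 / (A / (A + 4 * L)) := by
        gcongr; exact mixingRounds_le hA.le hL hlog
    _ = 2 * (A + 4 * L) / L ^ 2 := by field_simp

/-- Let `T > 1`, `α ∈ (0,1)` and `λ₂ ∈ (0,1)`, write `L = |log λ₂|` and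
`A = 2·log T·(1−α)/α`, and for `ρ ∈ (0,1)` define
`k_ρ = ((√A + √(A + 8·L·|log(1−ρ)|))/(2L))²`.  Then there exists `ρ ∈ (0,1)` such that
`k_ρ/ρ ≤ 8·(α·L + (1−α)·log T)/(α·L²)`. -/
theorem mixing_rate_bound (T α lam₂ L A : ℝ) (hT : 1 < T) (hα : α ∈ Set.Ioo (0 : ℝ) 1)
    (hlam : lam₂ ∈ Set.Ioo (0 : ℝ) 1) (hL : L = |Real.log lam₂|)
    (hA : A = 2 * Real.log T * (1 - α) / α) :
    ∃ ρ ∈ Set.Ioo (0 : ℝ) 1,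
      ((Real.sqrt A + Real.sqrt (A + 8 * L * |Real.log (1 - ρ)|)) / (2 * L)) ^ 2 / ρ
        ≤ 8 * (α * L + (1 - α) * Real.log T) / (α * L ^ 2) := by
  obtain ⟨hα0, hα1⟩ := hα
  have hlogT : 0 < log T := log_pos hT
  have hL0 : 0 < L := hL ▸ abs_pos.mpr (log_neg hlam.1 hlam.2).ne
  have hA0 : 0 < A := hA ▸ div_pos (by nlinarith) hα0
  obtain ⟨ρ, hρ, hbound⟩ := exists_mixingRounds_div_le hA0 hL0
  refine ⟨ρ, hρ, hbound.trans ?_⟩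
  have hAα : A * α = 2 * log T * (1 - α) := by rw [hA]; field_simp
  rw [div_le_div_iff₀ (by positivity) (by positivity)]
  nlinarith [mul_pos (mul_pos hlogT (sub_pos.mpr hα1)) (pow_pos hL0 2)]
end

section
/- Let m ≥ 2 be an integer and p ∈ [0,1]. On the probability space {0,1}^m equipped with the m-fold product of the Bernoulli(p) measure, let B_1,…,B_m be the coordinate random variables, R = B_1 + ⋯ + B_m, and α = E[B_1/(1+R)]. Then E[B_1·B_2/(1+R)²] ≤ α/(m−1). -/
open Finset

/-- Let `m ≥ 2` and `p ∈ [0,1]`.  On the probability space `{0,1}^m` with the `m`-fold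
product of the Bernoulli(`p`) measure, let `B_1,…,B_m` be the coordinate random variables,
`R = B_1 + ⋯ + B_m`, and `α = E[B_1/(1+R)]`.  Then `E[B_1·B_2/(1+R)²] ≤ α/(m−1)`. -/
theorem bernoulli_pair_bound (m : ℕ) (hm : 2 ≤ m) (p : ℝ)
    (hp : p ∈ Set.Icc (0 : ℝ) 1) (α : ℝ)
    (hα : α = ∑ ω : Fin m → Bool, (∏ i, if ω i then p else 1 - p) *
        ((if ω ⟨0, by omega⟩ then (1 : ℝ) else 0) /
          (1 + ∑ i, if ω i then (1 : ℝ) else 0))) :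
    (∑ ω : Fin m → Bool, (∏ i, if ω i then p else 1 - p) *
        ((if ω ⟨0, by omega⟩ then (1 : ℝ) else 0) * (if ω ⟨1, hm⟩ then (1 : ℝ) else 0) /
          (1 + ∑ i, if ω i then (1 : ℝ) else 0) ^ 2))
      ≤ α / ((m : ℝ) - 1) := by
  set i0 : Fin m := ⟨0, by omega⟩ with hi0
  set i1 : Fin m := ⟨1, hm⟩ with hi1
  have h01 : i0 ≠ i1 := by simp [hi0, hi1, Fin.ext_iff]
  set w : (Fin m → Bool) → ℝ := fun ω => ∏ i, if ω i then p else 1 - p with hw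
  set R : (Fin m → Bool) → ℝ := fun ω => ∑ i, if ω i then (1 : ℝ) else 0 with hRdef
  set B : Fin m → (Fin m → Bool) → ℝ := fun j ω => if ω j then 1 else 0 with hB
  have hwpos : ∀ ω, 0 ≤ w ω := by
    intro ω
    apply Finset.prod_nonneg
    intro i _
    cases h : ω i <;> simp [hp.1, hp.2] <;> linarith [hp.2]
  have hRpos : ∀ ω, (0:ℝ) < 1 + R ω := by
    intro ω
    have : 0 ≤ R ω := by
      apply Finset.sum_nonneg; intro i _; split <;> norm_num
    linarith
  set S : ℝ := ∑ ω : Fin m → Bool, w ω * (B i0 ω * B i1 ω / (1 + R ω) ^ 2) with hS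
  -- symmetry: for each j ≠ i0 the pair expectation is the same
  have key : ∀ j : Fin m, j ≠ i0 →
      ∑ ω : Fin m → Bool, w ω * (B i0 ω * B j ω / (1 + R ω) ^ 2) = S := by
    intro j hj
    by_cases hj1 : j = i1
    · rw [hj1]
    · rw [hS]
      apply Fintype.sum_equiv (Equiv.piCongrLeft' (fun _ => Bool) (Equiv.swap i1 j))
      intro ω
      have he : ∀ i, (Equiv.piCongrLeft' (fun _ => Bool) (Equiv.swap i1 j)) ω i
          = ω (Equiv.swap i1 j i) := by
        intro i
        simp [Equiv.piCongrLeft'_apply, Equiv.symm_apply_eq]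
      have hwω : w ((Equiv.piCongrLeft' (fun _ => Bool) (Equiv.swap i1 j)) ω) = w ω := by
        simp only [hw, he]
        exact Equiv.prod_comp (Equiv.swap i1 j) fun i => if ω i then p else 1 - p
      have hRω : R ((Equiv.piCongrLeft' (fun _ => Bool) (Equiv.swap i1 j)) ω) = R ω := by
        simp only [hRdef, he]
        exact Equiv.sum_comp (Equiv.swap i1 j) fun i => if ω i then (1:ℝ) else 0
      have h0 : Equiv.swap i1 j i0 = i0 :=
        Equiv.swap_apply_of_ne_of_ne h01 (Ne.symm hj)
      have h1 : Equiv.swap i1 j i1 = j := Equiv.swap_apply_left i1 j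
      rw [hwω, hRω, hB]
      simp only [he, h0, h1]
  have card_erase : (Finset.univ.erase i0).card = m - 1 := by
    rw [Finset.card_erase_of_mem (Finset.mem_univ i0), Finset.card_univ, Fintype.card_fin]
  have hsum : ((m : ℝ) - 1) * S
      = ∑ ω : Fin m → Bool, w ω * (B i0 ω * (R ω - B i0 ω) / (1 + R ω) ^ 2) := by
    have h1 : ∑ j ∈ Finset.univ.erase i0,
        (∑ ω : Fin m → Bool, w ω * (B i0 ω * B j ω / (1 + R ω) ^ 2)) = ((m:ℝ) - 1) * S := by
      rw [Finset.sum_congr rfl (fun j hj => key j (Finset.ne_of_mem_erase hj))]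
      rw [Finset.sum_const, card_erase, nsmul_eq_mul]
      congr 1
      have : (1:ℕ) ≤ m := by omega
      push_cast [Nat.cast_sub this]
      ring
    rw [← h1, Finset.sum_comm]
    apply Finset.sum_congr rfl
    intro ω _
    have hRsum : ∑ j, B j ω = R ω := by simp only [hRdef, hB]
    have hErase : ∑ j ∈ Finset.univ.erase i0, B j ω = R ω - B i0 ω := by
      rw [Finset.sum_erase_eq_sub (Finset.mem_univ i0), hRsum]
    rw [← Finset.mul_sum]
    congr 1
    rw [← Finset.sum_div, ← Finset.mul_sum, hErase]
  have hineq : ((m : ℝ) - 1) * S ≤ α := by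
    rw [hsum, hα]
    apply Finset.sum_le_sum
    intro ω _
    show w ω * (B i0 ω * (R ω - B i0 ω) / (1 + R ω) ^ 2) ≤ w ω * (B i0 ω / (1 + R ω))
    apply mul_le_mul_of_nonneg_left _ (hwpos ω)
    have hpos := hRpos ω
    have hR0 : 0 ≤ R ω := Finset.sum_nonneg (fun i _ => by split <;> norm_num)
    by_cases h0 : ω i0
    · have hb : B i0 ω = 1 := by simp [hB, h0]
      rw [hb, div_le_div_iff₀ (by positivity) hpos]
      nlinarith
    · have hb : B i0 ω = 0 := by simp [hB, h0]
      rw [hb]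
      simp [le_div_iff₀ hpos]
  have hmm : (0:ℝ) < (m:ℝ) - 1 := by
    have : (2:ℝ) ≤ (m:ℝ) := by exact_mod_cast hm
    linarith
  calc S = ((m:ℝ)-1) * S / ((m:ℝ)-1) := by field_simp
    _ ≤ α / ((m:ℝ)-1) := by gcongr
end
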